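/- arXiv:2002.06560 — 2 statements merged into one kernel-verified Lean document; each statement's English description precedes it below -/
import Mathlib

section
/- Let L be a distributive lattice and let S be a set of lattice homomorphisms from L to 2 such that S contains both constant maps (the constant map 0 and the constant map 1) and S is a closed subset of the product space 2^L (2 discrete). Then S equals the set of all lattice homomorphisms from L to 2 if and only if S separates the points of L, i.e., for all distinct a, b ∈ L there exists φ ∈ S with φ(a) ≠ φ(b). -/
/-- A map between lattices preserving binary joins and meets (no bound constants
in the language). -/
def IsLatHom {α β : Type*} [Lattice α] [Lattice β] (f : α → β) : Prop :=
  (∀ a b, f (a ⊔ b) = f a ⊔ f b) ∧ (∀ a b, f (a ⊓ b) = f a ⊓ f b)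

/-!
Homomorphisms into `Bool` separate the points of a distributive lattice by the prime ideal
theorem. Conversely, let `S` separate points and let `f` be a homomorphism. On a finite set `F`,
let `a` be the join of the points `f` sends to `false` and `b` the meet of those it sends to
`true`; then `¬ b ≤ a`, and a member of `S` separating `a ⊓ b` from `b` must send `a` to `false`
and `b` to `true`, so by monotonicity it agrees with `f` on `F` (the constant maps handle the
case that one of the two parts is empty). Hence `f` lies in the closure of `S` in `Bool ^ L`.
-/

open Order Set Filter Topology

theorem IsLatHom.monotone {α β : Type*} [Lattice α] [Lattice β] {f : α → β}
    (hf : IsLatHom f) : Monotone f := fun a b hab => by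
  simpa [sup_eq_right.2 hab] using (hf.1 a b).ge

theorem Order.Ideal.IsPrime.exists_isLatHom_bool {P : Type*} [Lattice P] {J : Ideal P}
    (hJ : J.IsPrime) : ∃ f : P → Bool, IsLatHom f ∧ ∀ x, f x = false ↔ x ∈ J := by
  classical
  have inf_mem_iff : ∀ x y, x ⊓ y ∈ J ↔ x ∈ J ∨ y ∈ J := fun x y =>
    ⟨hJ.mem_or_mem, fun h => h.elim (J.lower inf_le_left) (J.lower inf_le_right)⟩
  refine ⟨fun x => decide (x ∉ J), ⟨fun x y => ?_, fun x y => ?_⟩, fun x => by simp⟩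
  · simp [Ideal.sup_mem_iff]
  · simp [inf_mem_iff, not_or]

theorem exists_isLatHom_bool_of_not_le {L : Type*} [DistribLattice L] {a b : L} (h : ¬b ≤ a) :
    ∃ f : L → Bool, IsLatHom f ∧ f a = false ∧ f b = true := by
  have hdisj : Disjoint (PFilter.principal b : Set L) (Ideal.principal a) :=
    Set.disjoint_left.2 fun x hbx hxa => h (le_trans hbx hxa)
  obtain ⟨J, hJ, haJ, hbJ⟩ := DistribLattice.prime_ideal_of_disjoint_filter_ideal hdisj
  obtain ⟨f, hf, hfJ⟩ := hJ.exists_isLatHom_bool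
  refine ⟨f, hf, (hfJ a).2 (haJ Ideal.mem_principal_self), ?_⟩
  have : b ∉ J := Set.disjoint_left.1 hbJ (PFilter.mem_principal.2 le_rfl)
  simpa [← hfJ b] using this

theorem exists_isLatHom_bool_ne {L : Type*} [DistribLattice L] {a b : L} (hab : a ≠ b) :
    ∃ f : L → Bool, IsLatHom f ∧ f a ≠ f b := by
  rcases not_and_or.1 (mt (fun h => le_antisymm h.2 h.1) hab) with h | h
  · obtain ⟨f, hf, hfa, hfb⟩ := exists_isLatHom_bool_of_not_le h
    exact ⟨f, hf, by simp [hfa, hfb]⟩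
  · obtain ⟨f, hf, hfb, hfa⟩ := exists_isLatHom_bool_of_not_le h
    exact ⟨f, hf, by simp [hfa, hfb]⟩

theorem mem_closure_of_forall_finset_exists_eqOn {ι X : Type*} [TopologicalSpace X]
    [DiscreteTopology X] {S : Set (ι → X)} {f : ι → X}
    (h : ∀ F : Finset ι, ∃ g ∈ S, EqOn g f F) : f ∈ closure S := by
  choose g hgS hgf using h
  have hg : Tendsto g atTop (𝓝 f) := by
    refine tendsto_pi_nhds.2 fun x => ?_
    rw [nhds_discrete, tendsto_pure]
    exact eventually_atTop.2 ⟨{x}, fun F hF => hgf F (hF (Finset.mem_singleton_self x))⟩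
  exact mem_closure_of_tendsto hg (Eventually.of_forall hgS)

section SeparatingSet

variable {L : Type*} [Lattice L] {S : Set (L → Bool)}

theorem exists_mem_eq_false_eq_true_of_not_le (hhom : ∀ g ∈ S, IsLatHom g)
    (hsep : ∀ a b : L, a ≠ b → ∃ g ∈ S, g a ≠ g b) {a b : L} (h : ¬b ≤ a) :
    ∃ g ∈ S, g a = false ∧ g b = true := by
  obtain ⟨g, hgS, hg⟩ := hsep (a ⊓ b) b (mt inf_eq_right.1 h)
  rw [(hhom g hgS).2] at hg
  refine ⟨g, hgS, ?_⟩
  revert hg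
  cases g a <;> cases g b <;> decide

theorem exists_mem_eqOn_of_separates (hhom : ∀ g ∈ S, IsLatHom g)
    (h0 : (fun _ : L => false) ∈ S) (h1 : (fun _ : L => true) ∈ S)
    (hsep : ∀ a b : L, a ≠ b → ∃ g ∈ S, g a ≠ g b) {f : L → Bool} (hf : IsLatHom f)
    (F : Finset L) : ∃ g ∈ S, EqOn g f F := by
  classical
  set A := F.filter (f · = false)
  set B := F.filter (f · = true)
  rcases A.eq_empty_or_nonempty with hA | hA
  · refine ⟨_, h1, fun x hx => ?_⟩
    have : x ∉ A := hA ▸ Finset.notMem_empty x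
    simpa [A, Finset.mem_coe.1 hx] using this
  rcases B.eq_empty_or_nonempty with hB | hB
  · refine ⟨_, h0, fun x hx => ?_⟩
    have : x ∉ B := hB ▸ Finset.notMem_empty x
    simpa [B, Finset.mem_coe.1 hx] using this
  have hfa : f (A.sup' hA id) = false := by
    rw [Finset.apply_sup'_eq_sup'_comp hA f hf.1]
    exact le_bot_iff.1 (Finset.sup'_le hA _ fun x hx => (Finset.mem_filter.1 hx).2.le)
  have hfb : f (B.inf' hB id) = true := by
    rw [Finset.apply_inf'_eq_inf'_comp hB f hf.2]
    exact top_le_iff.1 (Finset.le_inf' hB _ fun x hx => (Finset.mem_filter.1 hx).2.ge)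
  have hBA : ¬B.inf' hB id ≤ A.sup' hA id := fun hle => by
    have := hf.monotone hle
    rw [hfa, hfb] at this
    exact absurd this (by decide)
  obtain ⟨g, hgS, hga, hgb⟩ := exists_mem_eq_false_eq_true_of_not_le hhom hsep hBA
  refine ⟨g, hgS, fun x hx => ?_⟩
  cases hfx : f x
  · have hxa : x ≤ A.sup' hA id := Finset.le_sup' id (Finset.mem_filter.2 ⟨hx, hfx⟩)
    exact le_bot_iff.1 (((hhom g hgS).monotone hxa).trans_eq hga)
  · have hbx : B.inf' hB id ≤ x := Finset.inf'_le id (Finset.mem_filter.2 ⟨hx, hfx⟩)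
    exact top_le_iff.1 (hgb.symm.trans_le ((hhom g hgS).monotone hbx))

end SeparatingSet

/-- Let `L` be a distributive lattice and `S` a set of lattice
homomorphisms `L → 2` containing both constant maps and closed in the product space
`2^L` (`2 = Bool` discrete).  Then `S` equals the set of all lattice homomorphisms
`L → 2` if and only if `S` separates the points of `L`. -/
theorem closed_separating_set_eq_all_homs (L : Type*) [DistribLattice L]
    (S : Set (L → Bool))
    (hhom : ∀ f ∈ S, IsLatHom f)
    (h0 : (fun _ : L => false) ∈ S)
    (h1 : (fun _ : L => true) ∈ S)
    (hcl : IsClosed S) :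
    S = {f : L → Bool | IsLatHom f} ↔
      ∀ a b : L, a ≠ b → ∃ f ∈ S, f a ≠ f b := by
  constructor
  · rintro rfl a b hab
    exact exists_isLatHom_bool_ne hab
  · refine fun hsep => Set.Subset.antisymm hhom fun f hf => hcl.closure_subset ?_
    exact mem_closure_of_forall_finset_exists_eqOn
      (exists_mem_eqOn_of_separates hhom h0 h1 hsep hf)
end

section
/- Let L be a distributive lattice with greatest element 1 (included as a constant) and let α : H¹(L) → 2 be a continuous order-preserving map with α(constant map 1) = 1. Then there exists a unique b ∈ L such that α(φ) = φ(b) for every φ ∈ H¹(L). Consequently the evaluation map b ↦ (φ ↦ φ(b)) is an isomorphism of distributive lattices with 1 from L onto K¹(H¹(L)). -/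
open Order

/-- `H¹(L)` for a distributive lattice `L` with greatest element `1`: homomorphisms
`φ : L → 2` with `φ(1) = 1`. -/
def H1Set (L : Type*) [Lattice L] [OrderTop L] : Set (L → Bool) :=
  {f | IsLatHom f ∧ f ⊤ = true}

abbrev H1Sp (L : Type*) [Lattice L] [OrderTop L] : Type _ := ↥(H1Set L)

/-- The constant map `1` as an element of `H¹(L)`. -/
def topEl1 (L : Type*) [Lattice L] [OrderTop L] : H1Sp L :=
  ⟨fun _ => true, ⟨⟨fun _ _ => by simp, fun _ _ => by simp⟩, rfl⟩⟩

/-- `K¹(H¹(L))`: continuous order-preserving maps `H¹(L) → 2` sending the constant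
map `1` (the greatest element of `H¹(L)`) to `1`. -/
def K1H (L : Type*) [Lattice L] [OrderTop L] : Type _ :=
  {α : H1Sp L → Bool // Continuous α ∧ Monotone α ∧ α (topEl1 L) = true}

/-- The evaluation map `L → K¹(H¹(L))`, `b ↦ (φ ↦ φ(b))`. -/
def evalK1H (L : Type*) [Lattice L] [OrderTop L] (b : L) : K1H L :=
  ⟨fun φ => (φ : L → Bool) b,
    (continuous_apply b).comp continuous_subtype_val,
    fun _ _ h => h b, rfl⟩

/- ### Auxiliary lemmas -/

lemma bool_not_le {x y : Bool} (h : ¬ x ≤ y) : x = true ∧ y = false := by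
  cases x <;> cases y <;> simp_all

lemma bool_true_le {y : Bool} (h : true ≤ y) : y = true := by
  cases y with
  | true => rfl
  | false => exact absurd h (by decide)

lemma bool_le_false {y : Bool} (h : y ≤ false) : y = false := by
  cases y with
  | false => rfl
  | true => exact absurd h (by decide)

lemma h1_mono {L : Type*} [Lattice L] [OrderTop L] (φ : H1Sp L) :
    Monotone (φ : L → Bool) := by
  intro x y hxy
  have h := φ.2.1.1 x y
  rw [sup_eq_right.2 hxy] at h
  rw [h]
  exact le_sup_left

lemma sep_lem {L : Type*} [DistribLattice L] [OrderTop L] {a b : L} (h : ¬ a ≤ b) :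
    ∃ φ : H1Sp L, (φ : L → Bool) a = true ∧ (φ : L → Bool) b = false := by
  classical
  have hdisj : Disjoint ((PFilter.principal (a : WithBot L)) : Set (WithBot L))
      ((Ideal.principal (b : WithBot L)) : Set (WithBot L)) := by
    rw [Set.disjoint_left]
    intro x hx hx'
    rw [SetLike.mem_coe, PFilter.mem_principal] at hx
    rw [SetLike.mem_coe, Ideal.mem_principal] at hx'
    exact h (WithBot.coe_le_coe.1 (hx.trans hx'))
  obtain ⟨J, hJp, hIJ, hFJ⟩ := DistribLattice.prime_ideal_of_disjoint_filter_ideal hdisj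
  have hbJ : (b : WithBot L) ∈ J := hIJ Ideal.mem_principal_self
  have haJ : (a : WithBot L) ∉ J :=
    Set.disjoint_left.1 hFJ (by simp)
  have hsupJ : ∀ x y : WithBot L, x ⊔ y ∈ J ↔ x ∈ J ∧ y ∈ J := fun x y =>
    ⟨fun hxy => ⟨J.lower le_sup_left hxy, J.lower le_sup_right hxy⟩,
     fun ⟨hx, hy⟩ => J.sup_mem hx hy⟩
  have hinfJ : ∀ x y : WithBot L, x ⊓ y ∈ J ↔ x ∈ J ∨ y ∈ J := fun x y =>
    ⟨fun hxy => hJp.mem_or_mem hxy,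
     fun hh => hh.elim (fun hx => J.lower inf_le_left hx) (fun hy => J.lower inf_le_right hy)⟩
  refine ⟨⟨fun x => !(decide ((x : WithBot L) ∈ J)), ⟨⟨fun x y => ?_, fun x y => ?_⟩, ?_⟩⟩, ?_, ?_⟩
  · by_cases hx : (x : WithBot L) ∈ J <;> by_cases hy : (y : WithBot L) ∈ J <;>
      simp [WithBot.coe_sup, hsupJ, hx, hy]
  · by_cases hx : (x : WithBot L) ∈ J <;> by_cases hy : (y : WithBot L) ∈ J <;>
      simp [WithBot.coe_inf, hinfJ, hx, hy]
  · have hT : ((⊤ : L) : WithBot L) ∉ J := fun hT =>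
      haJ (J.lower (WithBot.coe_le_coe.2 le_top) hT)
    rw [WithBot.coe_top] at hT
    simp [hT]
  · simp [haJ]
  · simp [hbJ]

lemma h1set_isClosed (L : Type*) [Lattice L] [OrderTop L] : IsClosed (H1Set L) := by
  have heq : H1Set L = (⋂ (a : L) (b : L), {f : L → Bool | f (a ⊔ b) = f a ⊔ f b}) ∩
      ((⋂ (a : L) (b : L), {f : L → Bool | f (a ⊓ b) = f a ⊓ f b}) ∩
        {f : L → Bool | f ⊤ = true}) := by
    ext f
    simp only [H1Set, IsLatHom, Set.mem_setOf_eq, Set.mem_inter_iff, Set.mem_iInter]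
    tauto
  rw [heq]
  have hsup : Continuous fun p : Bool × Bool => p.1 ⊔ p.2 := continuous_of_discreteTopology
  have hinf : Continuous fun p : Bool × Bool => p.1 ⊓ p.2 := continuous_of_discreteTopology
  refine IsClosed.inter ?_ (IsClosed.inter ?_ ?_)
  · refine isClosed_iInter fun a => isClosed_iInter fun b =>
      isClosed_eq (continuous_apply (a ⊔ b)) ?_
    have h1 : Continuous fun f : L → Bool => (fun p : Bool × Bool => p.1 ⊔ p.2) (f a, f b) :=
      hsup.comp ((continuous_apply a).prodMk (continuous_apply b))
    exact h1
  · refine isClosed_iInter fun a => isClosed_iInter fun b =>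
      isClosed_eq (continuous_apply (a ⊓ b)) ?_
    have h1 : Continuous fun f : L → Bool => (fun p : Bool × Bool => p.1 ⊓ p.2) (f a, f b) :=
      hinf.comp ((continuous_apply a).prodMk (continuous_apply b))
    exact h1
  · exact isClosed_eq (continuous_apply ⊤) continuous_const

instance (L : Type*) [Lattice L] [OrderTop L] : CompactSpace (H1Sp L) :=
  isCompact_iff_compactSpace.1 (h1set_isClosed L).isCompact

lemma exists_rep {L : Type*} [DistribLattice L] [OrderTop L]
    (α : H1Sp L → Bool) (hc : Continuous α) (hm : Monotone α) (ht : α (topEl1 L) = true) :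
    ∃ b : L, ∀ φ : H1Sp L, α φ = (φ : L → Bool) b := by
  classical
  set U : Set (H1Sp L) := α ⁻¹' {true} with hU
  have hUo : IsOpen U := hc.isOpen_preimage _ (isOpen_discrete _)
  have hUc : IsClosed U := IsClosed.preimage hc (isClosed_discrete _)
  have hmemU : ∀ φ : H1Sp L, φ ∈ U ↔ α φ = true := fun φ => Iff.rfl
  -- Step A: separating each ψ ∉ U from U by a single element
  have stepA : ∀ ψ : H1Sp L, ψ ∉ U →
      ∃ c : L, (∀ φ ∈ U, (φ : L → Bool) c = true) ∧ (ψ : L → Bool) c = false := by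
    intro ψ hψ
    set ι := {a : L // (ψ : L → Bool) a = false}
    have hcov : U ⊆ ⋃ i : ι, {φ : H1Sp L | (φ : L → Bool) i.1 = true} := by
      intro φ hφ
      have hφt : α φ = true := hφ
      have hnle : ¬ φ ≤ ψ := by
        intro hle
        have h1 := hm hle
        rw [hφt] at h1
        exact hψ ((hmemU ψ).2 (bool_true_le h1))
      have hex : ∃ a : L, ¬ ((φ : L → Bool) a ≤ (ψ : L → Bool) a) := by
        by_contra hcon
        push_neg at hcon
        exact hnle (Subtype.coe_le_coe.1 fun a => hcon a)
      obtain ⟨a, ha⟩ := hex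
      obtain ⟨ha1, ha2⟩ := bool_not_le ha
      exact Set.mem_iUnion.2 ⟨⟨a, ha2⟩, ha1⟩
    obtain ⟨t, htt⟩ := hUc.isCompact.elim_finite_subcover
      (fun i : ι => {φ : H1Sp L | (φ : L → Bool) i.1 = true})
      (fun i => by
        have h1 : Continuous fun φ : H1Sp L => (φ : L → Bool) i.1 :=
          (continuous_apply (i.1 : L)).comp continuous_subtype_val
        exact h1.isOpen_preimage {true} (isOpen_discrete _))
      hcov
    have htopU : topEl1 L ∈ U := (hmemU _).2 ht
    obtain ⟨i0, hi0, _⟩ := Set.mem_iUnion₂.1 (htt htopU)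
    have htne : t.Nonempty := ⟨i0, hi0⟩
    refine ⟨t.sup' htne (fun i => (i : ι).1), ?_, ?_⟩
    · intro φ hφ
      obtain ⟨i, hit, hφi⟩ := Set.mem_iUnion₂.1 (htt hφ)
      have hle : (i : ι).1 ≤ t.sup' htne (fun i => (i : ι).1) := Finset.le_sup' _ hit
      have := h1_mono φ hle
      rw [hφi] at this
      exact bool_true_le this
    · refine Finset.sup'_induction (p := fun x => (ψ : L → Bool) x = false) htne _
        (fun x hx y hy => ?_) (fun i _ => i.2)
      show (ψ : L → Bool) (x ⊔ y) = false
      rw [ψ.2.1.1 x y, hx, hy]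
      rfl
  -- Step B: cover the complement of U
  set κ := {c : L // ∀ φ ∈ U, (φ : L → Bool) c = true}
  have hcov2 : Uᶜ ⊆ ⋃ i : κ, {ψ : H1Sp L | (ψ : L → Bool) i.1 = false} := by
    intro ψ hψ
    obtain ⟨c, hc1, hc2⟩ := stepA ψ hψ
    exact Set.mem_iUnion.2 ⟨⟨c, hc1⟩, hc2⟩
  obtain ⟨t, htt⟩ := (hUo.isClosed_compl.isCompact).elim_finite_subcover
    (fun i : κ => {ψ : H1Sp L | (ψ : L → Bool) i.1 = false})
    (fun i => by
      have h1 : Continuous fun ψ : H1Sp L => (ψ : L → Bool) i.1 :=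
        (continuous_apply (i.1 : L)).comp continuous_subtype_val
      exact h1.isOpen_preimage {false} (isOpen_discrete _))
    hcov2
  refine ⟨t.inf (fun i => (i : κ).1), ?_⟩
  intro φ
  by_cases hφ : φ ∈ U
  · rw [(hmemU φ).1 hφ]
    have key : ∀ s : Finset κ, (φ : L → Bool) (s.inf (fun i => (i : κ).1)) = true := by
      intro s
      induction s using Finset.cons_induction with
      | empty => rw [Finset.inf_empty]; exact φ.2.2
      | cons i s his ih =>
        rw [Finset.inf_cons, φ.2.1.2, ih, i.2 φ hφ]
        rfl
    exact (key t).symm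
  · have hφf : α φ = false := by
      have := (hmemU φ).not.1 hφ
      simpa using this
    rw [hφf]
    obtain ⟨i, hit, hφi⟩ := Set.mem_iUnion₂.1 (htt hφ)
    have hle : t.inf (fun i => (i : κ).1) ≤ (i : κ).1 := Finset.inf_le hit
    have := h1_mono φ hle
    rw [hφi] at this
    exact (bool_le_false this).symm

lemma agree_eq {L : Type*} [DistribLattice L] [OrderTop L] {a b : L}
    (h : ∀ φ : H1Sp L, (φ : L → Bool) a = (φ : L → Bool) b) : a = b := by
  by_contra hne
  rcases not_and_or.1 (fun hh : a ≤ b ∧ b ≤ a => hne (le_antisymm hh.1 hh.2)) with h1 | h1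
  · obtain ⟨φ, hφa, hφb⟩ := sep_lem h1
    have := h φ
    rw [hφa, hφb] at this
    simp at this
  · obtain ⟨φ, hφb, hφa⟩ := sep_lem h1
    have := h φ
    rw [hφa, hφb] at this
    simp at this

/-- Let `L` be a distributive lattice with greatest element `1` and
`α : H¹(L) → 2` a continuous order-preserving map with `α(const 1) = 1`.  Then there is
a unique `b ∈ L` with `α(φ) = φ(b)` for all `φ ∈ H¹(L)`.  Consequently the evaluation
map `b ↦ (φ ↦ φ(b))` is an isomorphism of distributive lattices with `1` from `L` onto
`K¹(H¹(L))` (the latter carrying the pointwise operations, with `1` the constant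
map `1`). -/
theorem evaluation_isomorphism_one_bound (L : Type*) [DistribLattice L] [OrderTop L] :
    (∀ α : H1Sp L → Bool, Continuous α → Monotone α → α (topEl1 L) = true →
        ∃! b : L, ∀ φ : H1Sp L, α φ = (φ : L → Bool) b) ∧
      Function.Bijective (evalK1H L) ∧
      (∀ a b : L, ∀ φ : H1Sp L,
        (evalK1H L (a ⊔ b)).1 φ = (evalK1H L a).1 φ ⊔ (evalK1H L b).1 φ) ∧
      (∀ a b : L, ∀ φ : H1Sp L,
        (evalK1H L (a ⊓ b)).1 φ = (evalK1H L a).1 φ ⊓ (evalK1H L b).1 φ) ∧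
      ((evalK1H L ⊤).1 = fun _ => true) := by
  have huniq : ∀ α : H1Sp L → Bool, Continuous α → Monotone α → α (topEl1 L) = true →
      ∃! b : L, ∀ φ : H1Sp L, α φ = (φ : L → Bool) b := by
    intro α hc hm ht
    obtain ⟨b, hb⟩ := exists_rep α hc hm ht
    exact ⟨b, hb, fun b' hb' => agree_eq fun φ => by rw [← hb φ, ← hb' φ]⟩
  refine ⟨huniq, ⟨?_, ?_⟩, fun a b φ => φ.2.1.1 a b, fun a b φ => φ.2.1.2 a b, ?_⟩
  · intro a b hab
    exact agree_eq fun φ => congrFun (congrArg Subtype.val hab) φ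
  · intro k
    obtain ⟨b, hb⟩ := exists_rep k.1 k.2.1 k.2.2.1 k.2.2.2
    exact ⟨b, Subtype.ext (funext fun φ => (hb φ).symm)⟩
  · funext φ
    exact φ.2.2
end
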